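/- For 0 < s < 1, the function x ↦ (Γ(x+1)/Γ(x+s))·exp((s-1)·ψ(x+√s)) is strictly decreasing on (0,∞). -/

import Mathlib

noncomputable def psi (x : ℝ) : ℝ := deriv (fun t => Real.log (Real.Gamma t)) x

open Real Set Filter Topology

lemma gamma_analytic : AnalyticOnNhd ℝ Real.Gamma (Set.Ioi 0) := by
  have hC : AnalyticOnNhd ℂ Complex.Gamma {z : ℂ | 0 < z.re} := by
    refine DifferentiableOn.analyticOnNhd ?_ (isOpen_lt continuous_const Complex.continuous_re)
    intro w hw
    refine (Complex.differentiableAt_Gamma w fun m => ?_).differentiableWithinAt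
    intro h
    simp only [Set.mem_setOf_eq, h] at hw
    rw [show ((-(m:ℂ)).re) = -(m:ℝ) by simp] at hw
    have : (0:ℝ) ≤ m := Nat.cast_nonneg m
    linarith
  intro x hx
  have h1 : AnalyticAt ℝ (fun t : ℝ => (t : ℂ)) x := Complex.ofRealCLM.analyticAt x
  have h2 : AnalyticAt ℝ Complex.Gamma ((x : ℝ) : ℂ) := by
    refine (hC _ ?_).restrictScalars
    simpa using hx.out
  have h4 := ((Complex.reCLM.analyticAt (Complex.Gamma (x:ℂ))).comp h2).comp h1
  have he : Real.Gamma = fun t : ℝ => (Complex.Gamma (t:ℂ)).re := by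
    funext t; rw [Complex.Gamma_ofReal]; simp
  rw [he]
  simpa [Function.comp_def] using h4

noncomputable def Gq (x : ℝ) : ℝ := deriv Real.Gamma x / Real.Gamma x


lemma Gq_analytic : AnalyticOnNhd ℝ Gq (Set.Ioi 0) :=
  gamma_analytic.deriv.div gamma_analytic (fun x hx => (Real.Gamma_pos_of_pos hx).ne')

lemma hasDerivAt_logGamma {x : ℝ} (hx : 0 < x) :
    HasDerivAt (fun t => Real.log (Real.Gamma t)) (Gq x) x :=
  ((gamma_analytic x hx).differentiableAt).hasDerivAt.log (Real.Gamma_pos_of_pos hx).ne'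

lemma psi_eq {x : ℝ} (hx : 0 < x) : psi x = Gq x := (hasDerivAt_logGamma hx).deriv

lemma F_hasDerivAt {x : ℝ} (hx : 0 < x) :
    HasDerivAt (fun t => Real.log (Real.Gamma t)) (psi x) x := by
  rw [psi_eq hx]; exact hasDerivAt_logGamma hx

lemma psi_diffAt {x : ℝ} (hx : 0 < x) : DifferentiableAt ℝ psi x := by
  refine ((Gq_analytic x hx).differentiableAt).congr_of_eventuallyEq ?_
  filter_upwards [Ioi_mem_nhds hx] with t ht
  exact psi_eq ht

lemma psi_hasDerivAt {x : ℝ} (hx : 0 < x) : HasDerivAt psi (deriv psi x) x :=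
  (psi_diffAt hx).hasDerivAt

lemma psi_add_one {x : ℝ} (hx : 0 < x) : psi (x + 1) = psi x + x⁻¹ := by
  have hL : HasDerivAt (fun t => Real.log (Real.Gamma (t + 1))) (psi (x + 1)) x := by
    have := (F_hasDerivAt (by linarith : (0:ℝ) < x + 1)).comp x ((hasDerivAt_id x).add_const 1)
    simpa [Function.comp_def] using this
  have hR : HasDerivAt (fun t => Real.log (Real.Gamma t) + Real.log t) (psi x + x⁻¹) x :=
    (F_hasDerivAt hx).add (Real.hasDerivAt_log hx.ne')
  have e : (fun t => Real.log (Real.Gamma (t + 1))) =ᶠ[𝓝 x]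
      fun t => Real.log (Real.Gamma t) + Real.log t := by
    filter_upwards [Ioi_mem_nhds hx] with t ht
    rw [Real.Gamma_add_one ht.ne', Real.log_mul ht.ne' (Real.Gamma_pos_of_pos ht).ne']
    ring
  exact hL.unique (hR.congr_of_eventuallyEq e)

lemma psi'_add_one {x : ℝ} (hx : 0 < x) :
    deriv psi (x + 1) = deriv psi x - (x ^ 2)⁻¹ := by
  have hL : HasDerivAt (fun t => psi (t + 1)) (deriv psi (x + 1)) x := by
    have := (psi_hasDerivAt (by linarith : (0:ℝ) < x + 1)).comp x ((hasDerivAt_id x).add_const 1)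
    simpa [Function.comp_def] using this
  have hR : HasDerivAt (fun t => psi t + t⁻¹) (deriv psi x + -(x ^ 2)⁻¹) x :=
    (psi_hasDerivAt hx).add (hasDerivAt_inv hx.ne')
  have e : (fun t => psi (t + 1)) =ᶠ[𝓝 x] fun t => psi t + t⁻¹ := by
    filter_upwards [Ioi_mem_nhds hx] with t ht
    exact psi_add_one ht
  have h := hL.unique (hR.congr_of_eventuallyEq e)
  linarith

lemma psi_mono : MonotoneOn psi (Set.Ioi 0) := by
  have h := Real.convexOn_log_Gamma.monotoneOn_deriv
    (fun x hx => (F_hasDerivAt hx).differentiableAt)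
  exact h

lemma psi'_nonneg {x : ℝ} (hx : 0 < x) : 0 ≤ deriv psi x := by
  have ht : Tendsto (slope psi x) (𝓝[>] x) (𝓝 (deriv psi x)) :=
    (hasDerivAt_iff_tendsto_slope.mp (psi_hasDerivAt hx)).mono_left
      (nhdsWithin_mono x (fun y hy => ne_of_gt hy))
  refine ge_of_tendsto ht ?_
  filter_upwards [self_mem_nhdsWithin] with y hy
  have hxy : x < y := hy
  have hm : psi x ≤ psi y := psi_mono hx (lt_trans hx hxy) hxy.le
  rw [slope_def_field]
  have : 0 < y - x := by linarith
  apply div_nonneg <;> linarith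

lemma psi_shift {y : ℝ} (hy : 0 < y) (n : ℕ) :
    psi (y + n) = psi y + ∑ k ∈ Finset.range n, (y + k)⁻¹ := by
  induction n with
  | zero => simp
  | succ n ih =>
    have hyn : 0 < y + n := by positivity
    have h1 : y + ((n : ℕ) + 1 : ℕ) = (y + n) + 1 := by push_cast; ring
    rw [h1, psi_add_one hyn, ih, Finset.sum_range_succ]
    ring

lemma psi'_shift {y : ℝ} (hy : 0 < y) (n : ℕ) :
    deriv psi (y + n) = deriv psi y - ∑ k ∈ Finset.range n, ((y + k) ^ 2)⁻¹ := by
  induction n with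
  | zero => simp
  | succ n ih =>
    have hyn : 0 < y + n := by positivity
    have h1 : y + ((n : ℕ) + 1 : ℕ) = (y + n) + 1 := by push_cast; ring
    rw [h1, psi'_add_one hyn, ih, Finset.sum_range_succ]
    ring

lemma term_ineq {s a : ℝ} (h0 : 0 < s) (h1 : s < 1) (ha : 0 < a) :
    (a + s)⁻¹ - (a + 1)⁻¹ ≤ (1 - s) * ((a + Real.sqrt s) ^ 2)⁻¹ := by
  have hsq : Real.sqrt s ^ 2 = s := Real.sq_sqrt h0.le
  have hsn : 0 < Real.sqrt s := Real.sqrt_pos.mpr h0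
  have h2 : 2 * Real.sqrt s ≤ 1 + s := by nlinarith [sq_nonneg (1 - Real.sqrt s)]
  have hA : 0 < a + s := by linarith
  have hB : 0 < a + 1 := by linarith
  have hY : 0 < a + Real.sqrt s := by linarith
  have key : (a + Real.sqrt s) ^ 2 ≤ (a + s) * (a + 1) := by nlinarith
  have e : (a + s)⁻¹ - (a + 1)⁻¹ = (1 - s) * ((a + s) * (a + 1))⁻¹ := by
    field_simp
    ring
  rw [e]
  gcongr

lemma term_ineq_strict {s a : ℝ} (h0 : 0 < s) (h1 : s < 1) (ha : 0 < a) :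
    (a + s)⁻¹ - (a + 1)⁻¹ < (1 - s) * ((a + Real.sqrt s) ^ 2)⁻¹ := by
  have hsq : Real.sqrt s ^ 2 = s := Real.sq_sqrt h0.le
  have hsn : 0 < Real.sqrt s := Real.sqrt_pos.mpr h0
  have hlt : Real.sqrt s < 1 := by
    nlinarith
  have h2 : 2 * Real.sqrt s < 1 + s := by nlinarith [sq_nonneg (1 - Real.sqrt s)]
  have hA : 0 < a + s := by linarith
  have hB : 0 < a + 1 := by linarith
  have hY : 0 < a + Real.sqrt s := by linarith
  have key : (a + Real.sqrt s) ^ 2 < (a + s) * (a + 1) := by nlinarith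
  have e : (a + s)⁻¹ - (a + 1)⁻¹ = (1 - s) * ((a + s) * (a + 1))⁻¹ := by
    field_simp
    ring
  rw [e]
  have h3 : ((a + s) * (a + 1))⁻¹ < ((a + Real.sqrt s) ^ 2)⁻¹ := by
    apply inv_strictAnti₀ (by positivity) key
  have : 0 < 1 - s := by linarith
  exact (mul_lt_mul_of_pos_left h3 this)

lemma key_ineq {s x : ℝ} (h0 : 0 < s) (h1 : s < 1) (hx : 0 < x) :
    psi (x + 1) - psi (x + s) < (1 - s) * deriv psi (x + Real.sqrt s) := by
  have hsn : 0 < Real.sqrt s := Real.sqrt_pos.mpr h0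
  set y := x + Real.sqrt s with hy_def
  have hy : 0 < y := by simp only [hy_def]; linarith
  set δ := (1 - s) * (y ^ 2)⁻¹ - ((x + s)⁻¹ - (x + 1)⁻¹) with hδ_def
  have hδ : 0 < δ := by
    have h := term_ineq_strict h0 h1 hx
    simp only [hδ_def, hy_def]
    linarith
  obtain ⟨n, hn⟩ := exists_nat_gt δ⁻¹
  have hδinv : 0 < δ⁻¹ := by positivity
  have hn' : (x + n)⁻¹ < δ := by
    have hh : δ⁻¹ < x + n := by linarith
    have := inv_strictAnti₀ hδinv hh
    rwa [inv_inv] at this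
  have hn0 : 0 ∈ Finset.range n := by
    rw [Finset.mem_range]
    by_contra h
    push_neg at h
    interval_cases n
    simp at hn
    linarith
  have hx1 : (0:ℝ) < x + 1 := by linarith
  have hxs : (0:ℝ) < x + s := by linarith
  have hxn : (0:ℝ) < x + n := by positivity
  have hA := psi_shift hx1 n
  have hB := psi_shift hxs n
  have hr1 : psi (x + 1 + n) = psi (x + n) + (x + n)⁻¹ := by
    have h := psi_add_one hxn
    rwa [show x + n + 1 = x + 1 + n by ring] at h
  have hr2 : psi (x + n) ≤ psi (x + s + n) := by
    refine psi_mono ?_ ?_ (by linarith)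
    · exact Set.mem_Ioi.mpr hxn
    · exact Set.mem_Ioi.mpr (by linarith)
  have hC := psi'_shift hy n
  have hD : 0 ≤ deriv psi (y + n) := psi'_nonneg (by positivity)
  -- sum comparison
  have hd : ∀ k ∈ Finset.range n,
      0 ≤ (1 - s) * ((y + k) ^ 2)⁻¹ - ((x + s + k)⁻¹ - (x + 1 + k)⁻¹) := by
    intro k _
    have hk : (0:ℝ) < x + k := by positivity
    have h := term_ineq h0 h1 hk
    have e1 : x + k + s = x + s + k := by ring
    have e2 : x + k + 1 = x + 1 + k := by ring
    have e3 : x + k + Real.sqrt s = y + k := by simp only [hy_def]; ring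
    rw [e1, e2, e3] at h
    linarith
  have hd0 : (1 - s) * ((y + (0:ℕ)) ^ 2)⁻¹ - ((x + s + (0:ℕ))⁻¹ - (x + 1 + (0:ℕ))⁻¹) = δ := by
    simp [hδ_def]
  have hsum : δ ≤ ∑ k ∈ Finset.range n,
      ((1 - s) * ((y + k) ^ 2)⁻¹ - ((x + s + k)⁻¹ - (x + 1 + k)⁻¹)) := by
    rw [← hd0]
    exact Finset.single_le_sum hd hn0
  rw [Finset.sum_sub_distrib] at hsum
  -- assemble
  have hfin : (1 - s) * deriv psi y ≥ (1 - s) * ∑ k ∈ Finset.range n, ((y + k) ^ 2)⁻¹ := by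
    have : deriv psi y ≥ ∑ k ∈ Finset.range n, ((y + k) ^ 2)⁻¹ := by linarith
    have h1s : (0:ℝ) ≤ 1 - s := by linarith
    exact mul_le_mul_of_nonneg_left this h1s
  rw [Finset.mul_sum] at hfin
  have hsplit : psi (x + 1) - psi (x + s)
      = ∑ k ∈ Finset.range n, ((x + s + k)⁻¹ - (x + 1 + k)⁻¹)
        + (psi (x + 1 + n) - psi (x + s + n)) := by
    rw [Finset.sum_sub_distrib]
    linarith
  have hrem : psi (x + 1 + n) - psi (x + s + n) ≤ (x + n)⁻¹ := by linarith
  calc psi (x + 1) - psi (x + s)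
      ≤ ∑ k ∈ Finset.range n, ((x + s + k)⁻¹ - (x + 1 + k)⁻¹) + (x + n)⁻¹ := by
        rw [hsplit]; linarith
    _ < ∑ k ∈ Finset.range n, ((x + s + k)⁻¹ - (x + 1 + k)⁻¹) + δ := by linarith
    _ ≤ ∑ k ∈ Finset.range n, (1 - s) * ((y + k) ^ 2)⁻¹ := by
        rw [Finset.sum_sub_distrib]; linarith
    _ ≤ (1 - s) * deriv psi y := hfin

theorem stmt_8 (s : ℝ) (hs0 : 0 < s) (hs1 : s < 1) :
    StrictAntiOn
      (fun x : ℝ => (Real.Gamma (x + 1) / Real.Gamma (x + s)) *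
        Real.exp ((s - 1) * psi (x + Real.sqrt s)))
      (Set.Ioi (0 : ℝ)) := by
  have hsn : 0 < Real.sqrt s := Real.sqrt_pos.mpr hs0
  set g : ℝ → ℝ := fun x => Real.log (Real.Gamma (x + 1)) - Real.log (Real.Gamma (x + s))
      + (s - 1) * psi (x + Real.sqrt s) with hg_def
  have hder : ∀ x : ℝ, 0 < x → HasDerivAt g
      (psi (x + 1) - psi (x + s) + (s - 1) * deriv psi (x + Real.sqrt s)) x := by
    intro x hx
    have h1 : HasDerivAt (fun t => Real.log (Real.Gamma (t + 1))) (psi (x + 1)) x := by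
      have := (F_hasDerivAt (show (0:ℝ) < x + 1 by linarith)).comp x
        ((hasDerivAt_id x).add_const 1)
      simpa [Function.comp_def] using this
    have h2 : HasDerivAt (fun t => Real.log (Real.Gamma (t + s))) (psi (x + s)) x := by
      have := (F_hasDerivAt (show (0:ℝ) < x + s by linarith)).comp x
        ((hasDerivAt_id x).add_const s)
      simpa [Function.comp_def] using this
    have h3 : HasDerivAt (fun t => psi (t + Real.sqrt s)) (deriv psi (x + Real.sqrt s)) x := by
      have := (psi_hasDerivAt (show (0:ℝ) < x + Real.sqrt s by linarith)).comp x
        ((hasDerivAt_id x).add_const (Real.sqrt s))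
      simpa [Function.comp_def] using this
    exact (h1.sub h2).add (h3.const_mul (s - 1))
  have hanti : StrictAntiOn g (Set.Ioi 0) := by
    apply strictAntiOn_of_deriv_neg (convex_Ioi 0)
    · intro x hx
      exact ((hder x hx).differentiableAt.continuousAt).continuousWithinAt
    · intro x hx
      rw [interior_Ioi] at hx
      rw [(hder x hx).deriv]
      have h := key_ineq hs0 hs1 hx
      nlinarith [h]
  intro a ha b hb hab
  simp only [Set.mem_Ioi] at ha hb
  have key : ∀ t : ℝ, 0 < t → (Real.Gamma (t + 1) / Real.Gamma (t + s)) *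
      Real.exp ((s - 1) * psi (t + Real.sqrt s)) = Real.exp (g t) := by
    intro t ht
    have p1 := Real.Gamma_pos_of_pos (show (0:ℝ) < t + 1 by linarith)
    have p2 := Real.Gamma_pos_of_pos (show (0:ℝ) < t + s by linarith)
    rw [hg_def]
    rw [Real.exp_add, Real.exp_sub, Real.exp_log p1, Real.exp_log p2]
  show (Real.Gamma (b + 1) / Real.Gamma (b + s)) *
      Real.exp ((s - 1) * psi (b + Real.sqrt s))
    < (Real.Gamma (a + 1) / Real.Gamma (a + s)) *
      Real.exp ((s - 1) * psi (a + Real.sqrt s))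
  rw [key a ha, key b hb]
  exact Real.exp_lt_exp.mpr (hanti (Set.mem_Ioi.mpr ha) (Set.mem_Ioi.mpr hb) hab)
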